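/- Let n ≥ 1 be an integer, z ∈ ℂⁿ with z ≠ 0, λ ∈ ℝ, and ξ, η ∈ ℂⁿ. Then Σ_{k,j,i,q=1}^n R_{kj̄iq̄}(z,λ)·ξ^k·conj(ξ^j)·η^i·conj(η^q) = |η|²(|z|²|ξ|² − |⟨z̄,ξ⟩|²)/|z|⁶ + λ·|Σ_{i,j}(δ_{ij}|z|² − conj(z^i) z^j)η^i conj(ξ^j)|²/|z|⁸ + (λ²−2λ)·|⟨z̄,η⟩|²·(|z|²|ξ|² − |⟨z̄,ξ⟩|²)/|z|⁸, where ⟨z̄,v⟩ = Σ_m conj(z^m)v^m. In particular this quantity is a real number. -/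
import Mathlib

open Finset ComplexConjugate

/-- `|z|² = Σₘ |zᵐ|²` for `z ∈ ℂⁿ`. -/
noncomputable def zsq {n : ℕ} (z : Fin n → ℂ) : ℝ := ∑ m, Complex.normSq (z m)

/-- The Chern curvature tensor `R_{kj̄iq̄}(z,λ)` of the Hermitian metric `ω_λ`
(Lemma 2.1 of the paper). -/
noncomputable def Rten {n : ℕ} (z : Fin n → ℂ) (lam : ℝ) (k j i q : Fin n) : ℂ :=
  (if i = q then 1 else 0)
      * ((if j = k then ((zsq z : ℝ) : ℂ) else 0) - conj (z k) * z j) / ((zsq z : ℝ) : ℂ) ^ 3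
    + (lam : ℂ) * ((if i = j then ((zsq z : ℝ) : ℂ) else 0) - conj (z i) * z j)
        * ((if k = q then ((zsq z : ℝ) : ℂ) else 0) - conj (z k) * z q) / ((zsq z : ℝ) : ℂ) ^ 4
    + ((lam ^ 2 - 2 * lam : ℝ) : ℂ) * conj (z i) * z q
        * ((if k = j then ((zsq z : ℝ) : ℂ) else 0) - conj (z k) * z j) / ((zsq z : ℝ) : ℂ) ^ 4

section aux

variable {n : ℕ}

private lemma sum_comm4 (f : Fin n → Fin n → Fin n → Fin n → ℂ) :
    ∑ k, ∑ j, ∑ i, ∑ q, f k j i q = ∑ i, ∑ j, ∑ k, ∑ q, f k j i q := by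
  rw [show (∑ k, ∑ j, ∑ i, ∑ q, f k j i q) = ∑ k, ∑ i, ∑ j, ∑ q, f k j i q
      from Finset.sum_congr rfl fun k _ => Finset.sum_comm, Finset.sum_comm]
  exact Finset.sum_congr rfl fun i _ => Finset.sum_comm

private lemma quad_split1 (A : Fin n → Fin n → ℂ) (B C : Fin n → ℂ) :
    ∑ k, ∑ j, ∑ i, ∑ q, A k j * B i * C q * (if i = q then (1:ℂ) else 0)
      = (∑ k, ∑ j, A k j) * ∑ i, B i * C i := by
  simp only [mul_ite, mul_one, mul_zero, Finset.sum_ite_eq, Finset.mem_univ, if_true]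
  have h : ∀ k j, (∑ i, A k j * B i * C i) = A k j * ∑ i, B i * C i := fun k j => by
    rw [Finset.mul_sum]; exact Finset.sum_congr rfl fun i _ => mul_assoc _ _ _
  simp only [h, ← Finset.sum_mul]

private lemma quad_split2 (A B : Fin n → Fin n → ℂ) :
    ∑ k, ∑ j, ∑ i, ∑ q, A i j * B k q = (∑ i, ∑ j, A i j) * (∑ k, ∑ q, B k q) := by
  rw [sum_comm4]
  simp only [← Finset.mul_sum, ← Finset.sum_mul]

private lemma quad_split2' (A B : Fin n → Fin n → ℂ) :
    ∑ k, ∑ j, ∑ i, ∑ q, A k j * B i q = (∑ k, ∑ j, A k j) * (∑ i, ∑ q, B i q) := by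
  have h : ∀ k j, (∑ i, ∑ q, A k j * B i q) = A k j * ∑ i, ∑ q, B i q := fun k j => by
    simp only [Finset.mul_sum]
  simp only [h, ← Finset.sum_mul]

private lemma quad_split3 (A : Fin n → Fin n → ℂ) (B C : Fin n → ℂ) :
    ∑ k, ∑ j, ∑ i, ∑ q, A k j * B i * C q = (∑ k, ∑ j, A k j) * (∑ i, B i) * (∑ q, C q) := by
  simp only [mul_assoc]
  rw [quad_split2' A (fun i q => B i * C q),
    show (∑ i, ∑ q, B i * C q) = (∑ i, B i) * (∑ q, C q) by
      simp only [Finset.sum_mul, Finset.mul_sum]; exact Finset.sum_comm]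

private lemma double_delta (Z : ℂ) (w z u v : Fin n → ℂ) :
    ∑ k, ∑ j, ((if j = k then Z else 0) - w k * z j) * (u k * v j)
      = Z * (∑ k, u k * v k) - (∑ k, w k * u k) * (∑ j, z j * v j) := by
  simp only [sub_mul, Finset.sum_sub_distrib, ite_mul, zero_mul]
  congr 1
  · simp only [Finset.sum_ite_eq', Finset.mem_univ, if_true, Finset.mul_sum]
  · have h : ∀ k, (∑ j, w k * z j * (u k * v j)) = (w k * u k) * ∑ j, z j * v j := fun k => by
      rw [Finset.mul_sum]; exact Finset.sum_congr rfl fun j _ => by ring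
    simp only [h, ← Finset.sum_mul]

private lemma double_delta' (Z : ℂ) (w z u v : Fin n → ℂ) :
    ∑ k, ∑ j, ((if k = j then Z else 0) - w k * z j) * (u k * v j)
      = Z * (∑ k, u k * v k) - (∑ k, w k * u k) * (∑ j, z j * v j) := by
  simp only [sub_mul, Finset.sum_sub_distrib, ite_mul, zero_mul]
  congr 1
  · simp only [Finset.sum_ite_eq, Finset.mem_univ, if_true, Finset.mul_sum]
  · have h : ∀ k, (∑ j, w k * z j * (u k * v j)) = (w k * u k) * ∑ j, z j * v j := fun k => by
      rw [Finset.mul_sum]; exact Finset.sum_congr rfl fun j _ => by ring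
    simp only [h, ← Finset.sum_mul]

end aux

/-- Bisectional curvature formula.  For `z ≠ 0`, `λ ∈ ℝ` and `ξ, η ∈ ℂⁿ`,
`Σ R_{kj̄iq̄} ξᵏ ξ̄ʲ ηⁱ η̄ᑫ = |η|²(|z|²|ξ|² − |⟨z̄,ξ⟩|²)/|z|⁶`
`+ λ|Σ_{i,j}(δ_{ij}|z|² − z̄ⁱ zʲ)ηⁱ ξ̄ʲ|²/|z|⁸ + (λ²−2λ)|⟨z̄,η⟩|²(|z|²|ξ|² − |⟨z̄,ξ⟩|²)/|z|⁸`;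
in particular this quantity is a real number. -/
theorem bisectional_formula (n : ℕ) (hn : 1 ≤ n) (z : Fin n → ℂ) (hz : z ≠ 0)
    (lam : ℝ) (ξ η : Fin n → ℂ) :
    ∑ k, ∑ j, ∑ i, ∑ q, Rten z lam k j i q * ξ k * conj (ξ j) * η i * conj (η q)
      = ((((∑ m, Complex.normSq (η m))
            * (zsq z * ∑ m, Complex.normSq (ξ m)
                - Complex.normSq (∑ m, conj (z m) * ξ m)) / (zsq z) ^ 3
          + lam * Complex.normSq (∑ i, ∑ j,
                ((if i = j then ((zsq z : ℝ) : ℂ) else 0) - conj (z i) * z j)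
                  * η i * conj (ξ j)) / (zsq z) ^ 4
          + (lam ^ 2 - 2 * lam) * Complex.normSq (∑ m, conj (z m) * η m)
              * (zsq z * ∑ m, Complex.normSq (ξ m)
                  - Complex.normSq (∑ m, conj (z m) * ξ m)) / (zsq z) ^ 4 : ℝ)) : ℂ) := by
  have e1 : (∑ k, ∑ j, ∑ i, ∑ q,
        (if i = q then (1:ℂ) else 0)
            * ((if j = k then ((zsq z : ℝ) : ℂ) else 0) - conj (z k) * z j)
            / ((zsq z : ℝ) : ℂ) ^ 3
          * ξ k * conj (ξ j) * η i * conj (η q))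
      = ((((zsq z : ℝ) : ℂ) * (∑ m, ξ m * conj (ξ m))
            - (∑ m, conj (z m) * ξ m) * (∑ m, z m * conj (ξ m))) / ((zsq z : ℝ) : ℂ) ^ 3)
          * ∑ m, η m * conj (η m) := by
    calc _ = ∑ k, ∑ j, ∑ i, ∑ q,
          (((if j = k then ((zsq z : ℝ) : ℂ) else 0) - conj (z k) * z j)
              * (ξ k * conj (ξ j)) / ((zsq z : ℝ) : ℂ) ^ 3)
            * η i * conj (η q) * (if i = q then (1:ℂ) else 0) := by
          refine Finset.sum_congr rfl fun k _ => Finset.sum_congr rfl fun j _ =>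
            Finset.sum_congr rfl fun i _ => Finset.sum_congr rfl fun q _ => by ring
      _ = (∑ k, ∑ j, ((if j = k then ((zsq z : ℝ) : ℂ) else 0) - conj (z k) * z j)
              * (ξ k * conj (ξ j)) / ((zsq z : ℝ) : ℂ) ^ 3) * ∑ m, η m * conj (η m) :=
        quad_split1 _ _ _
      _ = _ := by
        rw [show (∑ k, ∑ j, ((if j = k then ((zsq z : ℝ) : ℂ) else 0) - conj (z k) * z j)
              * (ξ k * conj (ξ j)) / ((zsq z : ℝ) : ℂ) ^ 3)
            = (∑ k, ∑ j, ((if j = k then ((zsq z : ℝ) : ℂ) else 0) - conj (z k) * z j)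
              * (ξ k * conj (ξ j))) / ((zsq z : ℝ) : ℂ) ^ 3 by
              simp only [← Finset.sum_div],
          double_delta ((zsq z : ℝ) : ℂ) (fun m => conj (z m)) z ξ (fun m => conj (ξ m))]
  have e2 : (∑ k, ∑ j, ∑ i, ∑ q,
        (lam : ℂ) * ((if i = j then ((zsq z : ℝ) : ℂ) else 0) - conj (z i) * z j)
            * ((if k = q then ((zsq z : ℝ) : ℂ) else 0) - conj (z k) * z q)
            / ((zsq z : ℝ) : ℂ) ^ 4
          * ξ k * conj (ξ j) * η i * conj (η q))
      = (((zsq z : ℝ) : ℂ) * (∑ m, η m * conj (ξ m))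
            - (∑ m, conj (z m) * η m) * (∑ m, z m * conj (ξ m)))
        * ((((zsq z : ℝ) : ℂ) * (∑ m, ξ m * conj (η m))
            - (∑ m, conj (z m) * ξ m) * (∑ m, z m * conj (η m)))
          * ((lam : ℂ) / ((zsq z : ℝ) : ℂ) ^ 4)) := by
    calc _ = ∑ k, ∑ j, ∑ i, ∑ q,
          (((if i = j then ((zsq z : ℝ) : ℂ) else 0) - conj (z i) * z j) * (η i * conj (ξ j)))
          * ((((if k = q then ((zsq z : ℝ) : ℂ) else 0) - conj (z k) * z q) * (ξ k * conj (η q)))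
              * ((lam : ℂ) / ((zsq z : ℝ) : ℂ) ^ 4)) := by
          refine Finset.sum_congr rfl fun k _ => Finset.sum_congr rfl fun j _ =>
            Finset.sum_congr rfl fun i _ => Finset.sum_congr rfl fun q _ => by ring
      _ = (∑ i, ∑ j, ((if i = j then ((zsq z : ℝ) : ℂ) else 0) - conj (z i) * z j)
              * (η i * conj (ξ j)))
          * (∑ k, ∑ q, (((if k = q then ((zsq z : ℝ) : ℂ) else 0) - conj (z k) * z q)
              * (ξ k * conj (η q))) * ((lam : ℂ) / ((zsq z : ℝ) : ℂ) ^ 4)) :=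
        quad_split2 _ _
      _ = _ := by
        rw [double_delta' ((zsq z : ℝ) : ℂ) (fun m => conj (z m)) z η (fun m => conj (ξ m)),
          show (∑ k, ∑ q, (((if k = q then ((zsq z : ℝ) : ℂ) else 0) - conj (z k) * z q)
              * (ξ k * conj (η q))) * ((lam : ℂ) / ((zsq z : ℝ) : ℂ) ^ 4))
            = (∑ k, ∑ q, ((if k = q then ((zsq z : ℝ) : ℂ) else 0) - conj (z k) * z q)
              * (ξ k * conj (η q))) * ((lam : ℂ) / ((zsq z : ℝ) : ℂ) ^ 4) by
              simp only [← Finset.sum_mul],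
          double_delta' ((zsq z : ℝ) : ℂ) (fun m => conj (z m)) z ξ (fun m => conj (η m))]
  have e3 : (∑ k, ∑ j, ∑ i, ∑ q,
        ((lam ^ 2 - 2 * lam : ℝ) : ℂ) * conj (z i) * z q
            * ((if k = j then ((zsq z : ℝ) : ℂ) else 0) - conj (z k) * z j)
            / ((zsq z : ℝ) : ℂ) ^ 4
          * ξ k * conj (ξ j) * η i * conj (η q))
      = ((((zsq z : ℝ) : ℂ) * (∑ m, ξ m * conj (ξ m))
            - (∑ m, conj (z m) * ξ m) * (∑ m, z m * conj (ξ m)))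
          * (((lam ^ 2 - 2 * lam : ℝ) : ℂ) / ((zsq z : ℝ) : ℂ) ^ 4))
        * (∑ m, conj (z m) * η m) * (∑ m, z m * conj (η m)) := by
    calc _ = ∑ k, ∑ j, ∑ i, ∑ q,
          ((((if k = j then ((zsq z : ℝ) : ℂ) else 0) - conj (z k) * z j) * (ξ k * conj (ξ j)))
              * (((lam ^ 2 - 2 * lam : ℝ) : ℂ) / ((zsq z : ℝ) : ℂ) ^ 4))
            * (conj (z i) * η i) * (z q * conj (η q)) := by
          refine Finset.sum_congr rfl fun k _ => Finset.sum_congr rfl fun j _ =>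
            Finset.sum_congr rfl fun i _ => Finset.sum_congr rfl fun q _ => by ring
      _ = (∑ k, ∑ j, (((if k = j then ((zsq z : ℝ) : ℂ) else 0) - conj (z k) * z j)
              * (ξ k * conj (ξ j)))
              * (((lam ^ 2 - 2 * lam : ℝ) : ℂ) / ((zsq z : ℝ) : ℂ) ^ 4))
          * (∑ m, conj (z m) * η m) * (∑ m, z m * conj (η m)) := quad_split3 _ _ _
      _ = _ := by
        rw [show (∑ k, ∑ j, (((if k = j then ((zsq z : ℝ) : ℂ) else 0) - conj (z k) * z j)
              * (ξ k * conj (ξ j)))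
              * (((lam ^ 2 - 2 * lam : ℝ) : ℂ) / ((zsq z : ℝ) : ℂ) ^ 4))
            = (∑ k, ∑ j, ((if k = j then ((zsq z : ℝ) : ℂ) else 0) - conj (z k) * z j)
              * (ξ k * conj (ξ j)))
              * (((lam ^ 2 - 2 * lam : ℝ) : ℂ) / ((zsq z : ℝ) : ℂ) ^ 4) by
              simp only [← Finset.sum_mul],
          double_delta' ((zsq z : ℝ) : ℂ) (fun m => conj (z m)) z ξ (fun m => conj (ξ m))]
  have hM : (∑ i, ∑ j, ((if i = j then ((zsq z : ℝ) : ℂ) else 0) - conj (z i) * z j)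
        * η i * conj (ξ j))
      = ((zsq z : ℝ) : ℂ) * (∑ m, η m * conj (ξ m))
          - (∑ m, conj (z m) * η m) * (∑ m, z m * conj (ξ m)) := by
    rw [show (∑ i, ∑ j, ((if i = j then ((zsq z : ℝ) : ℂ) else 0) - conj (z i) * z j)
          * η i * conj (ξ j))
        = ∑ i, ∑ j, ((if i = j then ((zsq z : ℝ) : ℂ) else 0) - conj (z i) * z j)
          * (η i * conj (ξ j)) from
      Finset.sum_congr rfl fun i _ => Finset.sum_congr rfl fun j _ => mul_assoc _ _ _]
    exact double_delta' _ _ _ _ _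
  simp only [Rten, add_mul, Finset.sum_add_distrib]
  rw [e1, e2, e3]
  push_cast
  simp only [← Complex.mul_conj, hM]
  simp only [map_sub, map_mul, map_sum, Complex.conj_conj, Complex.conj_ofReal]
  rw [show (∑ m, conj (η m) * ξ m) = ∑ m, ξ m * conj (η m) from
    Finset.sum_congr rfl fun m _ => mul_comm _ _]
  ring
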